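/- arXiv:2402.09549 — 4 statements merged into one kernel-verified Lean document; each statement's English description precedes it below -/
import Mathlib

section
/- Assume (A1) and (A2). The no-swap-regret menu M_NSR is a menu and is Pareto-optimal. -/
open Finset

noncomputable section

/-- The product CSP `x ⊗ y`. -/
def prodCSP {m n : ℕ} (x : Fin m → ℝ) (y : Fin n → ℝ) : Fin m × Fin n → ℝ :=
  fun p => x p.1 * y p.2

/-- The `j`-th vertex `e_j` of a simplex. -/
def pureVec {k : ℕ} (j : Fin k) : Fin k → ℝ := fun j' => if j' = j then 1 else 0

/-- Linear extension of a payoff to CSPs. -/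
def linCSP {m n : ℕ} (u : Fin m → Fin n → ℝ) (φ : Fin m × Fin n → ℝ) : ℝ :=
  ∑ p : Fin m × Fin n, φ p * u p.1 p.2

/-- Payoff the learner would get by always deviating to the pure action `j'`. -/
def devCSP {m n : ℕ} (u : Fin m → Fin n → ℝ) (φ : Fin m × Fin n → ℝ) (j' : Fin n) : ℝ :=
  ∑ p : Fin m × Fin n, φ p * u p.1 j'

/-- Bilinear extension of a payoff to mixed strategies. -/
def mixPay {m n : ℕ} (u : Fin m → Fin n → ℝ) (x : Fin m → ℝ) (y : Fin n → ℝ) : ℝ :=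
  ∑ i, ∑ j, x i * y j * u i j

/-- Pure best responses of the learner to the optimizer mixed strategy `x`. -/
def BRL {m n : ℕ} (u : Fin m → Fin n → ℝ) (x : Fin m → ℝ) : Set (Fin n) :=
  {j | ∀ j' : Fin n, (∑ i, x i * u i j') ≤ ∑ i, x i * u i j}

/-- A CSP is no-regret. -/
def NoRegret {m n : ℕ} (u : Fin m → Fin n → ℝ) (φ : Fin m × Fin n → ℝ) : Prop :=
  ∀ j' : Fin n, devCSP u φ j' ≤ linCSP u φ

/-- A CSP is no-swap-regret. -/
def NoSwapRegret {m n : ℕ} (u : Fin m → Fin n → ℝ) (φ : Fin m × Fin n → ℝ) : Prop :=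
  ∀ j j' : Fin n, (∑ i, φ (i, j) * u i j') ≤ ∑ i, φ (i, j) * u i j

/-- The no-regret menu: all no-regret CSPs. -/
def MNR {m n : ℕ} (u : Fin m → Fin n → ℝ) : Set (Fin m × Fin n → ℝ) :=
  {φ | φ ∈ stdSimplex ℝ (Fin m × Fin n) ∧ NoRegret u φ}

/-- The no-swap-regret menu: all no-swap-regret CSPs. -/
def MNSR {m n : ℕ} (u : Fin m → Fin n → ℝ) : Set (Fin m × Fin n → ℝ) :=
  {φ | φ ∈ stdSimplex ℝ (Fin m × Fin n) ∧ NoSwapRegret u φ}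

/-- A menu: a closed convex subset of the simplex of CSPs such that every optimizer
mixed strategy has some product response inside the set. -/
def IsMenu {m n : ℕ} (M : Set (Fin m × Fin n → ℝ)) : Prop :=
  IsClosed M ∧ Convex ℝ M ∧ M ⊆ stdSimplex ℝ (Fin m × Fin n) ∧
    ∀ x ∈ stdSimplex ℝ (Fin m), ∃ y ∈ stdSimplex ℝ (Fin n), prodCSP x y ∈ M

/-- The learner's value when the optimizer with payoff `uO` picks their favorite point
of the menu `M`, breaking ties in the learner's favor. -/
def VL {m n : ℕ} (uL uO : Fin m → Fin n → ℝ) (M : Set (Fin m × Fin n → ℝ)) : ℝ :=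
  sSup (linCSP uL '' {φ ∈ M | ∀ ψ ∈ M, linCSP uO ψ ≤ linCSP uO φ})

/-- `M'` Pareto-dominates `M` (for the learner payoff `uL`). -/
def ParetoDominates {m n : ℕ} (uL : Fin m → Fin n → ℝ)
    (M' M : Set (Fin m × Fin n → ℝ)) : Prop :=
  (∀ uO : Fin m → Fin n → ℝ, VL uL uO M ≤ VL uL uO M') ∧
    ∃ uO : Fin m → Fin n → ℝ, VL uL uO M < VL uL uO M'

/-- A menu is Pareto-optimal if it is a menu and no menu Pareto-dominates it. -/
def ParetoOptimal {m n : ℕ} (uL : Fin m → Fin n → ℝ) (M : Set (Fin m × Fin n → ℝ)) : Prop :=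
  IsMenu M ∧ ∀ M' : Set (Fin m × Fin n → ℝ), IsMenu M' → ¬ ParetoDominates uL M' M

/-- (A2): no weakly dominated learner actions. -/
def A2cond {m n : ℕ} (u : Fin m → Fin n → ℝ) : Prop :=
  ∀ j : Fin n, (∃ x ∈ stdSimplex ℝ (Fin m), j ∈ BRL u x) →
    ∃ x' ∈ stdSimplex ℝ (Fin m), BRL u x' = {j}

/-- `U^-(M)`: the minimal learner utility over `M`. -/
def UminusVal {m n : ℕ} (u : Fin m → Fin n → ℝ) (M : Set (Fin m × Fin n → ℝ)) : ℝ :=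
  sInf (linCSP u '' M)

/-- `U^+(M)`: the maximal learner utility over `M`. -/
def UplusVal {m n : ℕ} (u : Fin m → Fin n → ℝ) (M : Set (Fin m × Fin n → ℝ)) : ℝ :=
  sSup (linCSP u '' M)

/-- `M^-`: the set of learner-utility-minimizing points of `M`. -/
def MminusSet {m n : ℕ} (u : Fin m → Fin n → ℝ) (M : Set (Fin m × Fin n → ℝ)) :
    Set (Fin m × Fin n → ℝ) :=
  {φ ∈ M | linCSP u φ = UminusVal u M}

/-- `M^+`: the set of learner-utility-maximizing points of `M`. -/
def MplusSet {m n : ℕ} (u : Fin m → Fin n → ℝ) (M : Set (Fin m × Fin n → ℝ)) :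
    Set (Fin m × Fin n → ℝ) :=
  {φ ∈ M | linCSP u φ = UplusVal u M}

/-- The zero-sum value `U_ZS = min_x max_y u_L(x,y)`. -/
def UZSval {m n : ℕ} (u : Fin m → Fin n → ℝ) : ℝ :=
  sInf ((fun x => sSup ((fun y => mixPay u x y) '' stdSimplex ℝ (Fin n))) ''
    stdSimplex ℝ (Fin m))

/-!
Let `M'` be a menu that Pareto-dominates `M_NSR`; we show `M' = M_NSR`.

`M' ⊆ M_NSR`: fix an optimizer payoff `u_O`. For a compact set `M` the support function
`r ↦ max_M (u_O + r u_L)` is convex and `V_L(M, u_O + r u_L)` is a subgradient of it at `r`.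
Domination therefore makes the difference of the support functions of `M'` and `M_NSR`
nondecreasing in `r`, and for large `r` both maxima are attained at the profile of (A1), which
is no-swap-regret. Hence `max_{M'} u_O ≤ max_{M_NSR} u_O` for every `u_O`, and convex
separation gives the inclusion.

`M_NSR ⊆ M'`: if `j` is a best response to `x`, (A2) lets us perturb `x` so that `j` becomes the
unique best response; the only no-swap-regret response of `M' ⊆ M_NSR` is then `e_j`, and
closedness gives `x ⊗ e_j ∈ M'`. Every no-swap-regret CSP is a mixture of such products.
-/

open Filter Topology

variable {m n : ℕ}

lemma continuous_linCSP (u : Fin m → Fin n → ℝ) : Continuous (linCSP u) := by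
  unfold linCSP
  fun_prop

lemma linCSP_add_smul (u v : Fin m → Fin n → ℝ) (r : ℝ) (φ : Fin m × Fin n → ℝ) :
    linCSP (u + r • v) φ = linCSP u φ + r * linCSP v φ := by
  simp only [linCSP, Pi.add_apply, Pi.smul_apply, smul_eq_mul, mul_sum, ← sum_add_distrib]
  exact sum_congr rfl fun _ _ => by ring

lemma linCSP_le_of_forall_le {u : Fin m → Fin n → ℝ} {φ : Fin m × Fin n → ℝ}
    (hφ : φ ∈ stdSimplex ℝ (Fin m × Fin n)) {c : ℝ} (hc : ∀ i j, u i j ≤ c) :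
    linCSP u φ ≤ c :=
  calc linCSP u φ ≤ ∑ p, φ p * c :=
        sum_le_sum fun p _ => mul_le_mul_of_nonneg_left (hc _ _) (hφ.1 p)
    _ = c := by rw [← sum_mul, hφ.2, one_mul]

lemma sum_pureVec_mul {k : ℕ} (i : Fin k) (f : Fin k → ℝ) :
    ∑ i', pureVec i i' * f i' = f i := by
  simp [pureVec]

lemma linCSP_prodCSP_pureVec (u : Fin m → Fin n → ℝ) (i : Fin m) (j : Fin n) :
    linCSP u (prodCSP (pureVec i) (pureVec j)) = u i j := by
  simp only [linCSP, prodCSP, Fintype.sum_prod_type, mul_assoc, ← mul_sum, sum_pureVec_mul]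

lemma pureVec_mem_stdSimplex {k : ℕ} (j : Fin k) : pureVec j ∈ stdSimplex ℝ (Fin k) :=
  ⟨fun j' => by unfold pureVec; split_ifs <;> norm_num, by simp [pureVec]⟩

lemma prodCSP_mem_stdSimplex {x : Fin m → ℝ} {y : Fin n → ℝ}
    (hx : x ∈ stdSimplex ℝ (Fin m)) (hy : y ∈ stdSimplex ℝ (Fin n)) :
    prodCSP x y ∈ stdSimplex ℝ (Fin m × Fin n) :=
  ⟨fun p => mul_nonneg (hx.1 p.1) (hy.1 p.2), by
    simp only [prodCSP, Fintype.sum_prod_type]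
    rw [← sum_mul_sum, hx.2, hy.2, one_mul]⟩

section SupportFunction

variable {M : Set (Fin m × Fin n → ℝ)}

lemma le_UplusVal (hM : IsCompact M) (u : Fin m → Fin n → ℝ) {φ : Fin m × Fin n → ℝ}
    (hφ : φ ∈ M) : linCSP u φ ≤ UplusVal u M :=
  le_csSup (hM.image (continuous_linCSP u)).bddAbove ⟨φ, hφ, rfl⟩

lemma UplusVal_le (hne : M.Nonempty) {u : Fin m → Fin n → ℝ} {c : ℝ}
    (hc : ∀ φ ∈ M, linCSP u φ ≤ c) : UplusVal u M ≤ c :=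
  csSup_le (hne.image _) (by rintro _ ⟨φ, hφ, rfl⟩; exact hc φ hφ)

lemma exists_linCSP_eq_UplusVal (hM : IsCompact M) (hne : M.Nonempty)
    (u : Fin m → Fin n → ℝ) : ∃ φ ∈ M, linCSP u φ = UplusVal u M := by
  simpa [UplusVal] using (hM.image (continuous_linCSP u)).sSup_mem (hne.image _)

lemma exists_VL_eq (hM : IsCompact M) (hne : M.Nonempty) (uL uO : Fin m → Fin n → ℝ) :
    ∃ φ ∈ M, linCSP uO φ = UplusVal uO M ∧ linCSP uL φ = VL uL uO M := by
  set A := {φ ∈ M | ∀ ψ ∈ M, linCSP uO ψ ≤ linCSP uO φ}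
  obtain ⟨φ₀, hφ₀, hφ₀max⟩ := exists_linCSP_eq_UplusVal hM hne uO
  have hA : A = M ∩ {φ | UplusVal uO M ≤ linCSP uO φ} := by
    ext φ
    exact ⟨fun h => ⟨h.1, hφ₀max ▸ h.2 φ₀ hφ₀⟩,
      fun h => ⟨h.1, fun ψ hψ => (le_UplusVal hM uO hψ).trans h.2⟩⟩
  have hAc : IsCompact A :=
    hA ▸ hM.inter_right (isClosed_le continuous_const (continuous_linCSP uO))
  have hAne : A.Nonempty := ⟨φ₀, hφ₀, fun ψ hψ => hφ₀max ▸ le_UplusVal hM uO hψ⟩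
  obtain ⟨φ, hφA, hφ⟩ := exists_linCSP_eq_UplusVal hAc hAne uL
  exact ⟨φ, hφA.1, le_antisymm (le_UplusVal hM uO hφA.1) (UplusVal_le hne hφA.2), hφ⟩

lemma UplusVal_add_smul_le (hM : IsCompact M) (hne : M.Nonempty) (uL uO : Fin m → Fin n → ℝ)
    (r s : ℝ) : UplusVal (uO + r • uL) M + (s - r) * VL uL (uO + r • uL) M ≤
      UplusVal (uO + s • uL) M := by
  obtain ⟨φ, hφ, hφO, hφL⟩ := exists_VL_eq hM hne uL (uO + r • uL)
  calc _ = linCSP (uO + s • uL) φ := by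
        rw [← hφO, ← hφL, linCSP_add_smul, linCSP_add_smul]; ring
    _ ≤ _ := le_UplusVal hM _ hφ

end SupportFunction

lemma sub_le_sub_of_subgradient_le {F G a b : ℝ → ℝ}
    (hF : ∀ r s, F r + (s - r) * a r ≤ F s) (hG : ∀ r s, G r + (s - r) * b r ≤ G s)
    (hba : ∀ r, b r ≤ a r) {x y : ℝ} (hxy : x ≤ y) :
    F x - G x ≤ F y - G y := by
  -- on the grid of mesh `h = (y - x) / (k + 1)` the subgradient inequalities telescope
  have key (k : ℕ) : F x - G x ≤ F y - G y + (y - x) / (k + 1) * (b y - b x) := by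
    set h := (y - x) / (k + 1)
    have hh : 0 ≤ h := by positivity
    have hstep (t : ℝ) : F t - G t + h * b t ≤ F (t + h) - G (t + h) + h * b (t + h) := by
      nlinarith [hF t (t + h), hG (t + h) t, hba t]
    have hmono : Monotone fun i : ℕ => F (x + i * h) - G (x + i * h) + h * b (x + i * h) :=
      monotone_nat_of_le_succ fun i => by simpa [add_mul, add_assoc] using hstep (x + i * h)
    have hend : x + ((k + 1 : ℕ) : ℝ) * h = y := by
      simp only [h]; push_cast; field_simp; ring
    have := hmono (Nat.zero_le (k + 1))
    simp only [hend, CharP.cast_eq_zero, zero_mul, add_zero] at this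
    linarith
  have hlim : Tendsto (fun k : ℕ => F y - G y + (y - x) / (k + 1) * (b y - b x)) atTop
      (𝓝 (F y - G y)) := by
    have := (((tendsto_one_div_add_atTop_nhds_zero_nat (𝕜 := ℝ)).const_mul (y - x)).mul_const
        (b y - b x)).const_add (F y - G y)
    simp only [mul_one_div, mul_zero, zero_mul, add_zero] at this
    exact this
  exact ge_of_tendsto' hlim key

lemma subset_of_forall_UplusVal_le {M N : Set (Fin m × Fin n → ℝ)} (hM : IsCompact M)
    (hN : IsCompact N) (hNconv : Convex ℝ N) (hNne : N.Nonempty)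
    (h : ∀ u, UplusVal u M ≤ UplusVal u N) : M ⊆ N := by
  intro φ hφ
  by_contra hφN
  obtain ⟨f, c, hfN, hfφ⟩ := geometric_hahn_banach_closed_point hNconv hN.isClosed hφN
  set u : Fin m → Fin n → ℝ := fun i j => f fun q => if (i, j) = q then 1 else 0
  have hu (ψ : Fin m × Fin n → ℝ) : linCSP u ψ = f ψ := by
    rw [← f.coe_coe, f.toLinearMap.pi_apply_eq_sum_univ ψ]
    rfl
  obtain ⟨ψ, hψ, hψmax⟩ := exists_linCSP_eq_UplusVal hN hNne u
  have hφc : f φ < c :=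
    calc f φ = linCSP u φ := (hu φ).symm
      _ ≤ UplusVal u M := le_UplusVal hM u hφ
      _ ≤ UplusVal u N := h u
      _ = f ψ := by rw [← hψmax, hu]
      _ < c := hfN ψ hψ
  exact lt_asymm hfφ hφc

lemma eventually_add_smul_le {uO uL : Fin m → Fin n → ℝ} {p : Fin m × Fin n}
    (hp : ∀ q, q ≠ p → uL q.1 q.2 < uL p.1 p.2) :
    ∀ᶠ T : ℝ in atTop, ∀ i j, (uO + T • uL) i j ≤ (uO + T • uL) p.1 p.2 := by
  simp only [eventually_all]
  intro i j
  by_cases hq : (i, j) = p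
  · subst hq
    exact Eventually.of_forall fun _ => le_rfl
  have hslope : 0 < uL p.1 p.2 - uL i j := sub_pos.2 (hp (i, j) hq)
  filter_upwards [(tendsto_atTop_add_const_left _ (uO p.1 p.2 - uO i j)
    (tendsto_id.atTop_mul_const hslope)).eventually_ge_atTop 0] with T hT
  simp only [Pi.add_apply, Pi.smul_apply, smul_eq_mul, id] at hT ⊢
  nlinarith

theorem subset_of_forall_VL_le {uL : Fin m → Fin n → ℝ} {p : Fin m × Fin n}
    (hp : ∀ q, q ≠ p → uL q.1 q.2 < uL p.1 p.2) {M N : Set (Fin m × Fin n → ℝ)}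
    (hM : IsCompact M) (hMne : M.Nonempty) (hMsub : M ⊆ stdSimplex ℝ (Fin m × Fin n))
    (hN : IsCompact N) (hNconv : Convex ℝ N) (hpN : prodCSP (pureVec p.1) (pureVec p.2) ∈ N)
    (H : ∀ uO, VL uL uO N ≤ VL uL uO M) : M ⊆ N := by
  refine subset_of_forall_UplusVal_le hM hN hNconv ⟨_, hpN⟩ fun uO => ?_
  have hmono {T : ℝ} (hT : 0 ≤ T) : UplusVal uO M - UplusVal uO N ≤
      UplusVal (uO + T • uL) M - UplusVal (uO + T • uL) N := by
    simpa using sub_le_sub_of_subgradient_le (UplusVal_add_smul_le hM hMne uL uO)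
      (UplusVal_add_smul_le hN ⟨_, hpN⟩ uL uO) (fun r => H _) hT
  obtain ⟨T, hTp, hT⟩ :=
    ((eventually_add_smul_le (uO := uO) hp).and (eventually_ge_atTop 0)).exists
  have hMN : UplusVal (uO + T • uL) M ≤ UplusVal (uO + T • uL) N := by
    refine UplusVal_le hMne fun φ hφ => (linCSP_le_of_forall_le (hMsub hφ) hTp).trans ?_
    rw [← linCSP_prodCSP_pureVec (uO + T • uL)]
    exact le_UplusVal hN _ hpN
  linarith [hmono hT]

lemma exists_mem_BRL [Nonempty (Fin n)] (u : Fin m → Fin n → ℝ) (x : Fin m → ℝ) :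
    ∃ j, j ∈ BRL u x := by
  obtain ⟨j, -, hj⟩ := exists_max_image univ (fun j => ∑ i, x i * u i j) univ_nonempty
  exact ⟨j, fun j' => hj j' (mem_univ j')⟩

section BestResponses

variable {u : Fin m → Fin n → ℝ}

lemma mem_BRL_pureVec_iff {i : Fin m} {j : Fin n} :
    j ∈ BRL u (pureVec i) ↔ ∀ j', u i j' ≤ u i j := by
  simp only [BRL, Set.mem_ofPred_eq, sum_pureVec_mul]

lemma sum_mix_mul (x x' : Fin m → ℝ) (a b : ℝ) (j : Fin n) :
    ∑ i, (a • x + b • x') i * u i j = a * ∑ i, x i * u i j + b * ∑ i, x' i * u i j := by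
  simp only [Pi.add_apply, Pi.smul_apply, smul_eq_mul, mul_sum, ← sum_add_distrib]
  exact sum_congr rfl fun _ _ => by ring

lemma BRL_mix_subset {x x' : Fin m → ℝ} {j : Fin n} (hj : j ∈ BRL u x) (hx' : BRL u x' = {j})
    {t : ℝ} (ht₀ : 0 < t) (ht₁ : t ≤ 1) : BRL u ((1 - t) • x + t • x') ⊆ {j} := by
  intro j' hj'
  by_contra hne
  have hj'x' : j' ∉ BRL u x' := by rw [hx']; exact hne
  obtain ⟨j₂, hj₂⟩ : ∃ j₂, ∑ i, x' i * u i j' < ∑ i, x' i * u i j₂ := by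
    simpa [BRL] using hj'x'
  have hjx' : j ∈ BRL u x' := hx'.symm ▸ rfl
  have := hj' j
  rw [sum_mix_mul, sum_mix_mul] at this
  nlinarith [hj j', hjx' j₂]

lemma mem_BRL_of_noSwapRegret_prodCSP {x : Fin m → ℝ} {y : Fin n → ℝ}
    (h : NoSwapRegret u (prodCSP x y)) {j : Fin n} (hj : 0 < y j) : j ∈ BRL u x := by
  intro j'
  have := h j j'
  simp only [prodCSP, mul_right_comm _ (y j), ← sum_mul] at this
  exact le_of_mul_le_mul_right this hj

lemma eq_pureVec_of_pos_imp {k : ℕ} {y : Fin k → ℝ} (hy : y ∈ stdSimplex ℝ (Fin k))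
    {j : Fin k} (h : ∀ j', 0 < y j' → j' = j) : y = pureVec j := by
  have hzero : ∀ j', j' ≠ j → y j' = 0 := fun j' hj' =>
    (hy.1 j').eq_or_lt.elim Eq.symm fun hpos => absurd (h j' hpos) hj'
  have hj : y j = 1 := by
    rw [← hy.2, sum_eq_single j (fun j' _ => hzero j') (by simp)]
  funext j'
  by_cases hj' : j' = j
  · simp [pureVec, hj', hj]
  · simp [pureVec, hj', hzero j' hj']

lemma prodCSP_pureVec_mem_MNSR {x : Fin m → ℝ} (hx : x ∈ stdSimplex ℝ (Fin m)) {j : Fin n}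
    (hj : j ∈ BRL u x) : prodCSP x (pureVec j) ∈ MNSR u := by
  refine ⟨prodCSP_mem_stdSimplex hx (pureVec_mem_stdSimplex j), fun j₁ j₂ => ?_⟩
  by_cases h : j₁ = j
  · subst h
    simpa [prodCSP, pureVec] using hj j₂
  · simp [prodCSP, pureVec, h]

end BestResponses

section Menus

variable {M : Set (Fin m × Fin n → ℝ)}

lemma IsMenu.isCompact (hM : IsMenu M) : IsCompact M :=
  (isCompact_stdSimplex ℝ _).of_isClosed_subset hM.1 hM.2.2.1

lemma IsMenu.nonempty [Nonempty (Fin m)] (hM : IsMenu M) : M.Nonempty := by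
  obtain ⟨y, -, hy⟩ := hM.2.2.2 _ (pureVec_mem_stdSimplex (Classical.arbitrary (Fin m)))
  exact ⟨_, hy⟩

lemma isMenu_MNSR [Nonempty (Fin n)] (u : Fin m → Fin n → ℝ) : IsMenu (MNSR u) := by
  have hMNSR : MNSR u = stdSimplex ℝ (Fin m × Fin n) ∩ ⋂ j, ⋂ j',
      {φ | ∑ i, φ (i, j) * u i j' ≤ ∑ i, φ (i, j) * u i j} := by
    ext φ
    simp [MNSR, NoSwapRegret]
  refine ⟨?_, ?_, fun φ hφ => hφ.1, fun x hx => ?_⟩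
  · rw [hMNSR]
    exact (isClosed_stdSimplex ℝ _).inter <| isClosed_iInter fun j => isClosed_iInter fun j' =>
      isClosed_le (by fun_prop) (by fun_prop)
  · rw [hMNSR]
    refine (convex_stdSimplex ℝ _).inter <| convex_iInter fun j => convex_iInter fun j' => ?_
    intro φ hφ ψ hψ a b ha hb _
    simp only [Set.mem_ofPred_eq, Pi.add_apply, Pi.smul_apply, smul_eq_mul, add_mul, mul_assoc,
      sum_add_distrib, ← mul_sum] at hφ hψ ⊢
    gcongr
  · obtain ⟨j, hj⟩ := exists_mem_BRL u x
    exact ⟨pureVec j, pureVec_mem_stdSimplex j, prodCSP_pureVec_mem_MNSR hx hj⟩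

lemma prodCSP_pureVec_mem_of_subset_MNSR {u : Fin m → Fin n → ℝ} (hA2 : A2cond u)
    (hM : IsMenu M) (hsub : M ⊆ MNSR u) {x : Fin m → ℝ} (hx : x ∈ stdSimplex ℝ (Fin m))
    {j : Fin n} (hj : j ∈ BRL u x) : prodCSP x (pureVec j) ∈ M := by
  obtain ⟨x', hx', hx'j⟩ := hA2 j ⟨x, hx, hj⟩
  set f : ℝ → Fin m × Fin n → ℝ := fun t => prodCSP ((1 - t) • x + t • x') (pureVec j)
  have hf : ∀ t ∈ Set.Ioc (0 : ℝ) 1, f t ∈ M := by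
    rintro t ⟨ht₀, ht₁⟩
    obtain ⟨y, hy, hyM⟩ := hM.2.2.2 _
      (convex_stdSimplex ℝ _ hx hx' (sub_nonneg.2 ht₁) ht₀.le (sub_add_cancel 1 t))
    have hyj : y = pureVec j := eq_pureVec_of_pos_imp hy fun j' hj' =>
      BRL_mix_subset hj hx'j ht₀ ht₁ (mem_BRL_of_noSwapRegret_prodCSP (hsub hyM).2 hj')
    rwa [hyj] at hyM
  have hcont : Continuous f := by
    refine continuous_pi fun p => ?_
    simp only [f, prodCSP, Pi.add_apply, Pi.smul_apply, smul_eq_mul]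
    fun_prop
  simpa [f] using hM.1.mem_of_tendsto ((hcont.tendsto 0).mono_left nhdsWithin_le_nhds)
    (mem_of_superset (Ioc_mem_nhdsGT one_pos) hf)

lemma MNSR_subset_convexHull (u : Fin m → Fin n → ℝ) :
    MNSR u ⊆ convexHull ℝ {ψ | ∃ x ∈ stdSimplex ℝ (Fin m), ∃ j ∈ BRL u x,
      ψ = prodCSP x (pureVec j)} := by
  rintro φ ⟨hφ, hNSR⟩
  set c : Fin n → ℝ := fun j => ∑ i, φ (i, j)
  -- `x j` is the distribution of the optimizer's action conditional on the learner playing `j`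
  set x : Fin n → Fin m → ℝ := fun j i => φ (i, j) / c j
  have hc₀ (j : Fin n) : 0 ≤ c j := sum_nonneg fun i _ => hφ.1 (i, j)
  have hc₁ : ∑ j, c j = 1 := by rw [← hφ.2, Fintype.sum_prod_type_right]
  have hcx (i : Fin m) (j : Fin n) : c j * x j i = φ (i, j) := by
    rcases (hc₀ j).eq_or_lt with hcj | hcj
    · rw [← hcj, zero_mul, eq_comm]
      exact (sum_eq_zero_iff_of_nonneg fun i _ => hφ.1 (i, j)).1 hcj.symm i (mem_univ i)
    · exact mul_div_cancel₀ _ hcj.ne'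
  have hrepr : φ = univ.centerMass c fun j => prodCSP (x j) (pureVec j) := by
    funext p
    simp [centerMass, hc₁, prodCSP, pureVec, hcx]
  classical
  rw [hrepr, ← centerMass_filter_ne_zero]
  refine centerMass_mem_convexHull _ (fun j _ => hc₀ j)
    (by rw [sum_filter_ne_zero, hc₁]; exact one_pos) fun j hj => ?_
  have hcj : 0 < c j := (hc₀ j).lt_of_ne' (mem_filter.1 hj).2
  refine ⟨x j, ⟨fun i => div_nonneg (hφ.1 (i, j)) hcj.le, ?_⟩, j, fun j' => ?_, rfl⟩
  · rw [← sum_div, div_self hcj.ne']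
  · have := hNSR j j'
    simp only [x, div_mul_eq_mul_div, ← sum_div]
    gcongr

lemma MNSR_subset_of_subset_MNSR {u : Fin m → Fin n → ℝ} (hA2 : A2cond u) (hM : IsMenu M)
    (hsub : M ⊆ MNSR u) : MNSR u ⊆ M :=
  (MNSR_subset_convexHull u).trans <| convexHull_min (by
    rintro _ ⟨x, hx, j, hj, rfl⟩
    exact prodCSP_pureVec_mem_of_subset_MNSR hA2 hM hsub hx hj) hM.2.1

end Menus

theorem nsr_menu_pareto_optimal_general
    (m n : ℕ)
    (uL : Fin m → Fin n → ℝ)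
    (hA1 : ∃ p : Fin m × Fin n, ∀ q : Fin m × Fin n, q ≠ p → uL q.1 q.2 < uL p.1 p.2)
    (hA2 : A2cond uL) :
    IsMenu (MNSR uL) ∧ ParetoOptimal uL (MNSR uL) := by
  obtain ⟨p, hp⟩ := hA1
  have : Nonempty (Fin m) := ⟨p.1⟩
  have : Nonempty (Fin n) := ⟨p.2⟩
  have hNSR := isMenu_MNSR uL
  refine ⟨hNSR, hNSR, fun M hM ⟨hle, uO, hlt⟩ => ?_⟩
  have hpN : prodCSP (pureVec p.1) (pureVec p.2) ∈ MNSR uL := by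
    refine prodCSP_pureVec_mem_MNSR (pureVec_mem_stdSimplex p.1) (mem_BRL_pureVec_iff.2 fun j => ?_)
    rcases eq_or_ne j p.2 with rfl | h
    · exact le_rfl
    · exact (hp (p.1, j) (by simp [Prod.ext_iff, h])).le
  have hsub : M ⊆ MNSR uL := subset_of_forall_VL_le hp hM.isCompact hM.nonempty hM.2.2.1
    hNSR.isCompact hNSR.2.1 hpN hle
  rw [hsub.antisymm (MNSR_subset_of_subset_MNSR hA2 hM hsub)] at hlt
  exact lt_irrefl _ hlt

/-- Assume (A1) and (A2). The no-swap-regret menu is a menu and is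
Pareto-optimal. -/
theorem nsr_menu_pareto_optimal
    (m n : ℕ) (hm : 0 < m) (hn : 0 < n)
    (uL : Fin m → Fin n → ℝ) (hbound : ∀ i j, uL i j ∈ Set.Icc (-1 : ℝ) 1)
    (hA1 : ∃ p : Fin m × Fin n, ∀ q : Fin m × Fin n, q ≠ p → uL q.1 q.2 < uL p.1 p.2)
    (hA2 : A2cond uL) :
    IsMenu (MNSR uL) ∧ ParetoOptimal uL (MNSR uL) :=
  nsr_menu_pareto_optimal_general m n uL hA1 hA2
end
end

section
/- Let m = n = 3 and let u_L be the rock-paper-scissors payoff: u_L(i,j) = 0 if j = i, u_L(i,j) = 1 if j ≡ i+1 (mod 3), and u_L(i,j) = −1 if j ≡ i−1 (mod 3). Then U_ZS = 0, the CSP φ = (1/3)(e_1⊗e_1) + (1/3)(e_2⊗e_2) + (1/3)(e_3⊗e_3) is no-regret with u_L(φ) = 0 (hence φ is a u_L-minimizing point of M_NR), and φ is not no-swap-regret (φ ∉ M_NSR); consequently M_NR^− ≠ M_NSR^−. -/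
open Finset

noncomputable section

/-- The learner's rock-paper-scissors payoff: `0` on the diagonal, `1` when the learner's
action is one step ahead (mod 3), `-1` otherwise. -/
def uRPS : Fin 3 → Fin 3 → ℝ := fun i j => if j = i then 0 else if j = i + 1 then 1 else -1

/-- The CSP `(1/3)(e_1 ⊗ e_1) + (1/3)(e_2 ⊗ e_2) + (1/3)(e_3 ⊗ e_3)`. -/
def phiRPS : Fin 3 × Fin 3 → ℝ :=
  (1 / 3 : ℝ) • prodCSP (pureVec 0) (pureVec 0) +
    (1 / 3 : ℝ) • prodCSP (pureVec 1) (pureVec 1) +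
      (1 / 3 : ℝ) • prodCSP (pureVec 2) (pureVec 2)

lemma uRPS_rowsum (i : Fin 3) : uRPS i 0 + uRPS i 1 + uRPS i 2 = 0 := by
  fin_cases i <;> norm_num [uRPS, Fin.ext_iff, Fin.val_add]

lemma uRPS_colsum (j : Fin 3) : uRPS 0 j + uRPS 1 j + uRPS 2 j = 0 := by
  fin_cases j <;> norm_num [uRPS, Fin.ext_iff, Fin.val_add, show ((3:Fin 3):ℕ) = 0 from rfl]

lemma uRPS_antisym (i j : Fin 3) : uRPS i j = - uRPS j i := by
  fin_cases i <;> fin_cases j <;> norm_num [uRPS, Fin.ext_iff, Fin.val_add]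

lemma uRPS_le_one (i j : Fin 3) : uRPS i j ≤ 1 := by
  fin_cases i <;> fin_cases j <;> norm_num [uRPS, Fin.ext_iff, Fin.val_add]

lemma lin_phi : linCSP uRPS phiRPS = 0 := by
  simp [linCSP, phiRPS, prodCSP, pureVec, Fintype.sum_prod_type, Fin.sum_univ_three]
  norm_num [uRPS]

lemma dev_phi (j' : Fin 3) : devCSP uRPS phiRPS j' = 0 := by
  have h := uRPS_colsum j'
  simp [devCSP, phiRPS, prodCSP, pureVec, Fintype.sum_prod_type, Fin.sum_univ_three]
  linarith

lemma noregret_phi : NoRegret uRPS phiRPS := by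
  intro j'
  rw [lin_phi, dev_phi]

lemma phi_simplex : phiRPS ∈ stdSimplex ℝ (Fin 3 × Fin 3) := by
  constructor
  · intro p
    simp only [phiRPS, prodCSP, pureVec, Pi.add_apply, Pi.smul_apply, smul_eq_mul]
    positivity
  · simp [phiRPS, prodCSP, pureVec, Fintype.sum_prod_type, Fin.sum_univ_three]
    norm_num

lemma nr_nonneg {φ : Fin 3 × Fin 3 → ℝ} (h : NoRegret uRPS φ) : 0 ≤ linCSP uRPS φ := by
  have hsum : devCSP uRPS φ 0 + devCSP uRPS φ 1 + devCSP uRPS φ 2 = 0 := by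
    unfold devCSP
    rw [← Finset.sum_add_distrib, ← Finset.sum_add_distrib]
    apply Finset.sum_eq_zero
    intro p _
    linear_combination φ p * uRPS_rowsum p.1
  have h0 := h 0; have h1 := h 1; have h2 := h 2
  linarith

lemma mixPay_self (x : Fin 3 → ℝ) : mixPay uRPS x x = 0 := by
  have key : mixPay uRPS x x = - mixPay uRPS x x := by
    calc mixPay uRPS x x = ∑ i, ∑ j, -(x j * x i * uRPS j i) := by
          unfold mixPay
          refine Finset.sum_congr rfl fun i _ => Finset.sum_congr rfl fun j _ => ?_
          rw [uRPS_antisym i j]; ring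
      _ = -∑ i : Fin 3, ∑ j : Fin 3, x j * x i * uRPS j i := by
          simp [Finset.sum_neg_distrib]
      _ = - mixPay uRPS x x := by rw [Finset.sum_comm]; rfl
  linarith

lemma mixPay_le_one {x y : Fin 3 → ℝ} (hx : x ∈ stdSimplex ℝ (Fin 3))
    (hy : y ∈ stdSimplex ℝ (Fin 3)) : mixPay uRPS x y ≤ 1 := by
  have h1 : mixPay uRPS x y ≤ ∑ i, ∑ j, x i * y j := by
    apply Finset.sum_le_sum
    intro i _
    apply Finset.sum_le_sum
    intro j _
    have hxy : 0 ≤ x i * y j := mul_nonneg (hx.1 i) (hy.1 j)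
    nlinarith [uRPS_le_one i j]
  have h2 : (∑ i, ∑ j : Fin 3, x i * y j) = 1 := by
    rw [← Finset.sum_mul_sum, hx.2, hy.2, one_mul]
  linarith

lemma sSup_mix_nonneg {x : Fin 3 → ℝ} (hx : x ∈ stdSimplex ℝ (Fin 3)) :
    0 ≤ sSup ((fun y => mixPay uRPS x y) '' stdSimplex ℝ (Fin 3)) := by
  have hb : BddAbove ((fun y => mixPay uRPS x y) '' stdSimplex ℝ (Fin 3)) := by
    refine ⟨1, ?_⟩
    rintro w ⟨y, hy, rfl⟩
    exact mixPay_le_one hx hy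
  calc (0:ℝ) = mixPay uRPS x x := (mixPay_self x).symm
    _ ≤ _ := le_csSup hb ⟨x, hx, rfl⟩

lemma uniform_simplex : (fun _ => (1/3 : ℝ)) ∈ stdSimplex ℝ (Fin 3) := by
  constructor
  · intro i; norm_num
  · norm_num [Fin.sum_univ_three]

lemma uZS : UZSval uRPS = 0 := by
  unfold UZSval
  have hsne : (stdSimplex ℝ (Fin 3)).Nonempty := ⟨_, uniform_simplex⟩
  apply le_antisymm
  · have hconst : ∀ y : Fin 3 → ℝ, mixPay uRPS (fun _ => (1/3 : ℝ)) y = 0 := by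
      intro y
      simp only [mixPay, Fin.sum_univ_three]
      linear_combination (y 0)/3 * uRPS_colsum 0 + (y 1)/3 * uRPS_colsum 1 +
        (y 2)/3 * uRPS_colsum 2
    have himg : (fun y => mixPay uRPS (fun _ => (1/3 : ℝ)) y) '' stdSimplex ℝ (Fin 3) = {0} := by
      apply Set.eq_singleton_iff_nonempty_unique_mem.mpr
      refine ⟨⟨_, ⟨_, hsne.some_mem, hconst _⟩⟩, ?_⟩
      rintro z ⟨y, _, rfl⟩; exact hconst y
    apply csInf_le
    · refine ⟨0, ?_⟩
      rintro z ⟨x, hx, rfl⟩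
      exact sSup_mix_nonneg hx
    · refine ⟨fun _ => (1/3 : ℝ), uniform_simplex, ?_⟩
      show sSup ((fun y => mixPay uRPS (fun _ => (1/3 : ℝ)) y) '' stdSimplex ℝ (Fin 3)) = 0
      rw [himg, csSup_singleton]
  · apply le_csInf
    · exact ⟨_, Set.mem_image_of_mem _ hsne.some_mem⟩
    · rintro b ⟨x, hx, rfl⟩
      exact sSup_mix_nonneg hx

lemma phi_MNR : phiRPS ∈ MNR uRPS := ⟨phi_simplex, noregret_phi⟩

lemma uminus_MNR : UminusVal uRPS (MNR uRPS) = 0 := by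
  unfold UminusVal
  apply le_antisymm
  · apply csInf_le
    · exact ⟨0, by rintro z ⟨φ, hφ, rfl⟩; exact nr_nonneg hφ.2⟩
    · exact ⟨phiRPS, phi_MNR, lin_phi⟩
  · apply le_csInf
    · exact ⟨0, phiRPS, phi_MNR, lin_phi⟩
    · rintro b ⟨φ, hφ, rfl⟩
      exact nr_nonneg hφ.2

lemma phi_not_nsr : ¬ NoSwapRegret uRPS phiRPS := by
  intro h
  have := h 0 1
  simp [phiRPS, prodCSP, pureVec, Fin.sum_univ_three] at this
  norm_num [uRPS] at this

/-- For rock-paper-scissors, `U_ZS = 0`, the diagonal CSP `phiRPS` is a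
no-regret CSP of learner value `0` (hence a `u_L`-minimizing point of `M_NR`), but it is
not no-swap-regret; consequently `M_NR^- ≠ M_NSR^-`. -/
theorem rps_no_regret_menu_not_pareto_optimal :
    UZSval uRPS = 0 ∧
    phiRPS ∈ stdSimplex ℝ (Fin 3 × Fin 3) ∧
    NoRegret uRPS phiRPS ∧
    linCSP uRPS phiRPS = 0 ∧
    phiRPS ∈ MminusSet uRPS (MNR uRPS) ∧
    phiRPS ∉ MNSR uRPS ∧
    MminusSet uRPS (MNR uRPS) ≠ MminusSet uRPS (MNSR uRPS) := by
  have hmm : phiRPS ∈ MminusSet uRPS (MNR uRPS) := ⟨phi_MNR, by rw [lin_phi, uminus_MNR]⟩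
  have hnsr : phiRPS ∉ MNSR uRPS := fun h => phi_not_nsr h.2
  refine ⟨uZS, phi_simplex, noregret_phi, lin_phi, hmm, hnsr, ?_⟩
  intro heq
  exact hnsr (heq ▸ hmm).1
end
end

section
/- Let d ≥ 1, let ℓ : ℝ^d → ℝ be a linear functional, and for a nonempty compact convex set S ⊆ ℝ^d and u ∈ ℝ^d define V(S, u) = max{ ℓ(s) : s ∈ S and ⟨u, s⟩ = max_{s'∈S} ⟨u, s'⟩ }. Let M1, M2 be nonempty compact convex subsets of ℝ^d and suppose u_O ∈ ℝ^d satisfies V(M1, u_O) > V(M2, u_O). Then there exists a nonempty open set U ⊆ ℝ^d (in particular a set of positive Lebesgue measure) such that V(M1, u) > V(M2, u) for every u ∈ U. -/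
/-!
Write `ℓ = ⟪v, ·⟫`, let `h_S(u) = sup_{s ∈ S} ⟪u, s⟫` be the support function of `S` and
`F(S, u)` the face of `S` exposed by `u`. Then `V(S, u) = h_{F(S,u)}(v)` is the right derivative
of `h_S` at `u` in direction `v`, and `h_S(u) + t V(S, u) ≤ h_S(u + t v)` for every real `t`.
Hence `V(M₂, u) < V(M₁, u)` as soon as
`h_{M₂}(u + t v) - h_{M₂}(u) < h_{M₁}(u) - h_{M₁}(u - t v)` for some `t > 0`. For fixed `t` this
condition is open in `u`, since support functions of compact sets are continuous, and it holds at
`u = u_O + t v` for small `t`, because the difference quotients of `h_{M₂}` at `u_O` tend to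
`V(M₂, u_O) < V(M₁, u_O)`.
-/

noncomputable section

/-- The learner's value when the optimizer with direction `u` picks its favourite point of
`S`, ties broken in favour of the linear functional `ℓ`. -/
def Vgen {d : ℕ} (ℓ : EuclideanSpace ℝ (Fin d) →ₗ[ℝ] ℝ) (S : Set (EuclideanSpace ℝ (Fin d)))
    (u : EuclideanSpace ℝ (Fin d)) : ℝ :=
  sSup (ℓ '' {s ∈ S | ∀ s' ∈ S, (inner ℝ u s' : ℝ) ≤ (inner ℝ u s : ℝ)})

open Filter Set Topology

variable {E : Type*} [NormedAddCommGroup E] [InnerProductSpace ℝ E]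

def supportFunction (S : Set E) (u : E) : ℝ :=
  sSup (inner ℝ u '' S)

abbrev exposedFace (S : Set E) (u : E) : Set E :=
  (innerSL ℝ u).toExposed S

variable {S T : Set E} {u v s : E} {c : ℝ}

theorem inner_le_supportFunction (hS : IsCompact S) (hs : s ∈ S) :
    inner ℝ u s ≤ supportFunction S u :=
  le_csSup (hS.image (continuous_const.inner continuous_id)).bddAbove (mem_image_of_mem _ hs)

theorem supportFunction_le (hne : S.Nonempty) (h : ∀ s ∈ S, inner ℝ u s ≤ c) :
    supportFunction S u ≤ c :=
  csSup_le (hne.image _) (forall_mem_image.2 h)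

theorem supportFunction_eq_inner_of_mem_exposedFace (hs : s ∈ exposedFace S u) :
    supportFunction S u = inner ℝ u s :=
  IsGreatest.csSup_eq ⟨mem_image_of_mem _ hs.1, forall_mem_image.2 hs.2⟩

theorem continuous_supportFunction (hS : IsCompact S) : Continuous (supportFunction S) :=
  hS.continuous_sSup (f := fun u s => inner ℝ u s) continuous_inner

theorem isCompact_exposedFace (hS : IsCompact S) : IsCompact (exposedFace S u) :=
  ContinuousLinearMap.toExposed.isExposed.isCompact hS

theorem exposedFace_nonempty (hS : IsCompact S) (hne : S.Nonempty) :
    (exposedFace S u).Nonempty := by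
  obtain ⟨s, hs, hmax⟩ := hS.exists_isMaxOn (f := inner ℝ u) hne (by fun_prop)
  exact ⟨s, hs, isMaxOn_iff.1 hmax⟩

theorem exists_mem_exposedFace_inner_eq (hS : IsCompact S) (hne : S.Nonempty) :
    ∃ s ∈ exposedFace S u, inner ℝ v s = supportFunction (exposedFace S u) v := by
  obtain ⟨s, hs, hsup⟩ := (isCompact_exposedFace hS).exists_sSup_image_eq
    (f := inner ℝ v) (exposedFace_nonempty hS hne) (by fun_prop)
  exact ⟨s, hs, hsup.symm⟩

theorem supportFunction_add_mul_le (hS : IsCompact S) (hne : S.Nonempty) (t : ℝ) :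
    supportFunction S u + t * supportFunction (exposedFace S u) v ≤
      supportFunction S (u + t • v) := by
  obtain ⟨s, hs, hvs⟩ := exists_mem_exposedFace_inner_eq (v := v) hS hne
  calc supportFunction S u + t * supportFunction (exposedFace S u) v
      = inner ℝ (u + t • v) s := by
        rw [inner_add_left, real_inner_smul_left, hvs,
          supportFunction_eq_inner_of_mem_exposedFace hs]
    _ ≤ supportFunction S (u + t • v) := inner_le_supportFunction hS hs.1

theorem eventually_supportFunction_add_smul_le (hS : IsCompact S) (hne : S.Nonempty)
    (hc : supportFunction (exposedFace S u) v < c) :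
    ∀ᶠ t in 𝓝[>] 0, supportFunction S (u + t • v) ≤ supportFunction S u + t * c := by
  -- Points of `S` with `c ≤ ⟪v, s⟫` lie off the exposed face, so uniformly below its level.
  set K := {s ∈ S | c ≤ inner ℝ v s}
  have hK : IsCompact K :=
    hS.inter_right (isClosed_le (g := inner ℝ v) continuous_const (by fun_prop))
  have hK_lt : ∀ s ∈ K, 0 < supportFunction S u - inner ℝ u s := by
    rintro s ⟨hs, hcs⟩
    refine sub_pos.2 ((inner_le_supportFunction hS hs).lt_of_ne fun heq => ?_)
    have hface : s ∈ exposedFace S u :=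
      ⟨hs, fun y hy => (inner_le_supportFunction hS hy).trans_eq heq.symm⟩
    exact (hcs.trans (inner_le_supportFunction (isCompact_exposedFace hS) hface)).not_gt hc
  obtain ⟨δ, hδ, hK_le⟩ := hK.exists_forall_le' (by fun_prop) hK_lt
  have hsmall : ∀ᶠ t in 𝓝 (0 : ℝ), t * (supportFunction S v - c) < δ :=
    ((continuous_mul_const _).tendsto' 0 0 (zero_mul _)).eventually_lt_const hδ
  filter_upwards [self_mem_nhdsWithin, nhdsWithin_le_nhds hsmall] with t (ht : 0 < t) htδ
  refine supportFunction_le hne fun s hs => ?_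
  rw [inner_add_left, real_inner_smul_left]
  by_cases hcs : c ≤ inner ℝ v s
  · have hu := hK_le s ⟨hs, hcs⟩
    have hv : t * inner ℝ v s ≤ t * supportFunction S v :=
      mul_le_mul_of_nonneg_left (inner_le_supportFunction hS hs) ht.le
    linarith
  · have hu := inner_le_supportFunction (u := u) hS hs
    have hv : t * inner ℝ v s ≤ t * c := mul_le_mul_of_nonneg_left (not_le.1 hcs).le ht.le
    linarith

theorem supportFunction_exposedFace_lt_of_sub_lt (hS : IsCompact S) (hSne : S.Nonempty)
    (hT : IsCompact T) (hTne : T.Nonempty) {t : ℝ} (ht : 0 < t)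
    (h : supportFunction T (u + t • v) - supportFunction T u <
      supportFunction S u - supportFunction S (u - t • v)) :
    supportFunction (exposedFace T u) v < supportFunction (exposedFace S u) v := by
  have hT := supportFunction_add_mul_le (u := u) (v := v) hT hTne t
  have hS := supportFunction_add_mul_le (u := u) (v := v) hS hSne (-t)
  rw [neg_smul, ← sub_eq_add_neg] at hS
  exact lt_of_mul_lt_mul_left (by linarith) ht.le

theorem exists_sub_lt_of_supportFunction_exposedFace_lt (hS : IsCompact S) (hSne : S.Nonempty)
    (hT : IsCompact T) (hTne : T.Nonempty)
    (hlt : supportFunction (exposedFace T u) v < supportFunction (exposedFace S u) v) :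
    ∃ t : ℝ, 0 < t ∧ ∃ w, supportFunction T (w + t • v) - supportFunction T w <
      supportFunction S w - supportFunction S (w - t • v) := by
  obtain ⟨c, hTc, hcS⟩ : ∃ c, supportFunction (exposedFace T u) v < c ∧
      2 * c - supportFunction (exposedFace T u) v < supportFunction (exposedFace S u) v :=
    ⟨(supportFunction (exposedFace S u) v + 3 * supportFunction (exposedFace T u) v) / 4,
      by linarith, by linarith⟩
  obtain ⟨t, hTt, ht⟩ :=
    ((eventually_supportFunction_add_smul_le hT hTne hTc).and self_mem_nhdsWithin).exists
  -- slope of `h_T` on `[t/2, t]` ≤ `2c - V_T` < `V_S` ≤ slope of `h_S` on `[0, t/2]`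
  refine ⟨t / 2, half_pos ht, u + (t / 2) • v, ?_⟩
  have hT_half := supportFunction_add_mul_le (u := u) (v := v) hT hTne (t / 2)
  have hS_half := supportFunction_add_mul_le (u := u) (v := v) hS hSne (t / 2)
  have hgap := mul_lt_mul_of_pos_left hcS ht
  rw [add_sub_cancel_right, add_assoc, ← add_smul, add_halves]
  linarith

theorem Vgen_eq_supportFunction_exposedFace {d : ℕ} (ℓ : EuclideanSpace ℝ (Fin d) →ₗ[ℝ] ℝ)
    (S : Set (EuclideanSpace ℝ (Fin d))) (u : EuclideanSpace ℝ (Fin d)) :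
    Vgen ℓ S u = supportFunction (exposedFace S u)
      ((InnerProductSpace.toDual ℝ _).symm ℓ.toContinuousLinearMap) := by
  have hℓ : ⇑ℓ = inner ℝ ((InnerProductSpace.toDual ℝ _).symm ℓ.toContinuousLinearMap) :=
    funext fun x => by rw [InnerProductSpace.toDual_symm_apply]; rfl
  rw [Vgen, hℓ]
  rfl

theorem strict_value_gap_on_open_set_general
    (d : ℕ) (ℓ : EuclideanSpace ℝ (Fin d) →ₗ[ℝ] ℝ)
    (M1 M2 : Set (EuclideanSpace ℝ (Fin d)))
    (h1ne : M1.Nonempty) (h1c : IsCompact M1)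
    (h2ne : M2.Nonempty) (h2c : IsCompact M2)
    (uO : EuclideanSpace ℝ (Fin d)) (hgap : Vgen ℓ M2 uO < Vgen ℓ M1 uO) :
    ∃ U : Set (EuclideanSpace ℝ (Fin d)), IsOpen U ∧ U.Nonempty ∧
      ∀ u ∈ U, Vgen ℓ M2 u < Vgen ℓ M1 u := by
  simp only [Vgen_eq_supportFunction_exposedFace] at hgap ⊢
  set v := (InnerProductSpace.toDual ℝ _).symm ℓ.toContinuousLinearMap
  obtain ⟨t, ht, w, hw⟩ :=
    exists_sub_lt_of_supportFunction_exposedFace_lt h1c h1ne h2c h2ne hgap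
  have hM1 := continuous_supportFunction h1c
  have hM2 := continuous_supportFunction h2c
  refine ⟨{u | supportFunction M2 (u + t • v) - supportFunction M2 u <
      supportFunction M1 u - supportFunction M1 (u - t • v)}, isOpen_lt ?_ ?_,
    ⟨w, hw⟩, fun u hu => ?_⟩
  · exact (hM2.comp (continuous_add_const _)).sub hM2
  · exact hM1.sub (hM1.comp (continuous_sub_right _))
  · exact supportFunction_exposedFace_lt_of_sub_lt h1c h1ne h2c h2ne ht hu

/-- If `V(M1, u_O) > V(M2, u_O)` for some direction `u_O`, then the strict
inequality holds on a nonempty open (hence positive-measure) set of directions. -/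
theorem strict_value_gap_on_open_set
    (d : ℕ) (hd : 1 ≤ d) (ℓ : EuclideanSpace ℝ (Fin d) →ₗ[ℝ] ℝ)
    (M1 M2 : Set (EuclideanSpace ℝ (Fin d)))
    (h1ne : M1.Nonempty) (h1c : IsCompact M1) (h1v : Convex ℝ M1)
    (h2ne : M2.Nonempty) (h2c : IsCompact M2) (h2v : Convex ℝ M2)
    (uO : EuclideanSpace ℝ (Fin d)) (hgap : Vgen ℓ M2 uO < Vgen ℓ M1 uO) :
    ∃ U : Set (EuclideanSpace ℝ (Fin d)), IsOpen U ∧ U.Nonempty ∧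
      ∀ u ∈ U, Vgen ℓ M2 u < Vgen ℓ M1 u :=
  strict_value_gap_on_open_set_general d ℓ M1 M2 h1ne h1c h2ne h2c uO hgap
end
end

section
/- Let n ≥ 2, let Δ_n ⊆ ℝ^n be the probability simplex, let α, η > 0, L ≥ 0, and let R : Δ_n → ℝ be α-strongly convex with respect to the Euclidean norm and L-Lipschitz with respect to the ℓ1 norm. Fix U ∈ ℝ^n and j ∈ [n] with U_j ≤ max_{j'∈[n]} U_{j'}. Let y* be the unique maximizer over Δ_n of Φ(y) = ⟨U, y⟩ − R(y)/η, and let y♭ be the unique maximizer of Φ over the face { y ∈ Δ_n : y_j = 0 }. If y*_j ≤ γ for some γ ≥ 0, then ‖y* − y♭‖₂ ≤ 2·√(Lγ/α). -/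
open Finset

noncomputable section

/-- The FTRL objective `Φ(y) = ⟨U, y⟩ − R(y)/η`. -/
def ftrlObj {n : ℕ} (U : Fin n → ℝ) (R : (Fin n → ℝ) → ℝ) (η : ℝ) (y : Fin n → ℝ) : ℝ :=
  (∑ i, U i * y i) - R y / η

/-!
Maximising `Φ` is minimising `f = R - η⟨U, ·⟩`, which is `α`-strongly convex like `R`. Let
`s = y*_j`. If `s < 1`, write `y* = (1 - s) ŷ + s e_j` with `ŷ` on the face. Moving `y♭` a fraction
`θ` towards `ŷ` rather than towards `y*` changes `f` by at most `4θLs`: the two points are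
`θ s ‖e_j - ŷ‖₁ = 2θs` apart, and optimality of `y*` against `e_j` gives
`η (U_j - ⟨U, ŷ⟩) ≤ 2L`. As `y♭` is optimal on the face, strong convexity along `[y♭, y*]` and
quadratic growth of `f` at `y*` then yield `α ‖y* - y♭‖₂² ≤ 4Ls` in the limit `θ → 0`. If `s = 1`,
strong convexity and the Lipschitz bound along `[y*, y♭]` alone give
`α ‖y* - y♭‖₂² ≤ 2L ‖y* - y♭‖₁ ≤ 4L`.
-/

open Set Filter Topology

theorem le_of_forall_le_add_mul {a b c : ℝ} (h : ∀ θ ∈ Ioo (0 : ℝ) 1, a ≤ c + θ * b) : a ≤ c := by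
  have hlim : Tendsto (fun θ : ℝ => c + θ * b) (𝓝[>] 0) (𝓝 c) := by
    have : Tendsto (fun θ : ℝ => c + θ * b) (𝓝 0) (𝓝 (c + 0 * b)) :=
      (continuous_const.add (continuous_id.mul continuous_const)).tendsto 0
    simpa using this.mono_left nhdsWithin_le_nhds
  exact ge_of_tendsto hlim (eventually_of_mem (Ioo_mem_nhdsGT zero_lt_one) h)

section StrongConvexity

variable {E : Type*} [AddCommGroup E] [Module ℝ E]

/-- `StrongConvexOn` with a general squared distance `D` in place of `‖x - y‖ ^ 2`: on
`Fin n → ℝ`, whose norm is the sup norm, this allows the squared Euclidean distance. -/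
def StrongConvexOnWrt (S : Set E) (α : ℝ) (D : E → E → ℝ) (f : E → ℝ) : Prop :=
  ∀ x ∈ S, ∀ y ∈ S, ∀ t ∈ Icc (0 : ℝ) 1,
    f (t • x + (1 - t) • y) ≤ t * f x + (1 - t) * f y - α / 2 * t * (1 - t) * D x y

variable {S F : Set E} {α L c s : ℝ} {D : E → E → ℝ} {f : E → ℝ} {x y z x' e : E}

theorem StrongConvexOnWrt.add_linearMap (hf : StrongConvexOnWrt S α D f) (ℓ : E →ₗ[ℝ] ℝ) :
    StrongConvexOnWrt S α D (f + ℓ) := by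
  intro x hx y hy t ht
  have := hf x hx y hy t ht
  simp only [Pi.add_apply, map_add, map_smul, smul_eq_mul]
  linarith

theorem StrongConvexOnWrt.add_half_mul_le_of_isMinOn (hf : StrongConvexOnWrt S α D f)
    (hS : Convex ℝ S) (hx : x ∈ S) (hmin : IsMinOn f S x) (hy : y ∈ S) :
    f x + α / 2 * D x y ≤ f y := by
  refine le_of_forall_le_add_mul (b := α / 2 * D x y) fun θ ⟨hθ0, hθ1⟩ => ?_
  have hconv := hf x hx y hy (1 - θ) ⟨by linarith, by linarith⟩
  have hmin' : f x ≤ f ((1 - θ) • x + θ • y) :=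
    hmin (hS hx hy (by linarith) (by linarith) (sub_add_cancel 1 θ))
  rw [sub_sub_cancel] at hconv
  have : θ * (f x + α / 2 * D x y) ≤ θ * (f y + θ * (α / 2 * D x y)) := by nlinarith
  exact le_of_mul_le_mul_left this hθ0

theorem StrongConvexOnWrt.mul_le_of_isMinOn_of_isMinOn_subset (hf : StrongConvexOnWrt S α D f)
    (hS : Convex ℝ S) (hF : Convex ℝ F) (hFS : F ⊆ S) (hx : x ∈ S) (hxmin : IsMinOn f S x)
    (hz : z ∈ F) (hzmin : IsMinOn f F z) (hx' : x' ∈ F)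
    (hcost : ∀ θ ∈ Ioo (0 : ℝ) 1, f (θ • x' + (1 - θ) • z) ≤ f (θ • x + (1 - θ) • z) + θ * c) :
    α * D x z ≤ c := by
  have hgrowth := hf.add_half_mul_le_of_isMinOn hS hx hxmin (hFS hz)
  refine le_of_forall_le_add_mul (b := α / 2 * D x z) fun θ ⟨hθ0, hθ1⟩ => ?_
  have hconv := hf x hx z (hFS hz) θ ⟨hθ0.le, hθ1.le⟩
  have hzle : f z ≤ f (θ • x' + (1 - θ) • z) :=
    hzmin (hF hx' hz hθ0.le (by linarith) (add_sub_cancel θ 1))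
  have : θ * (α * D x z) ≤ θ * (c + θ * (α / 2 * D x z)) := by
    nlinarith [hcost θ ⟨hθ0, hθ1⟩]
  exact le_of_mul_le_mul_left this hθ0

variable (p : Seminorm ℝ E) {R : E → ℝ}

theorem StrongConvexOnWrt.mul_le_two_mul_seminorm (hR : StrongConvexOnWrt S α D R)
    (hS : Convex ℝ S) (hlip : ∀ x ∈ S, ∀ y ∈ S, R x - R y ≤ L * p (x - y))
    (hx : x ∈ S) (hy : y ∈ S) : α * D x y ≤ 2 * L * p (x - y) := by
  refine le_of_forall_le_add_mul (b := α * D x y) fun θ ⟨hθ0, hθ1⟩ => ?_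
  have hmem {t : ℝ} (ht0 : 0 ≤ t) (ht1 : t ≤ 1) : t • x + (1 - t) • y ∈ S :=
    hS hx hy ht0 (by linarith) (add_sub_cancel t 1)
  have hconv := hR x hx y hy θ ⟨hθ0.le, hθ1.le⟩
  have hconv' := hR x hx y hy (1 - θ) ⟨by linarith, by linarith⟩
  have hlip_x := hlip x hx _ (hmem (t := 1 - θ) (by linarith) (by linarith))
  have hlip_y := hlip y hy _ (hmem hθ0.le hθ1.le)
  rw [sub_sub_cancel] at hconv' hlip_x
  have hx_sub : x - ((1 - θ) • x + θ • y) = θ • (x - y) := by module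
  have hy_sub : y - (θ • x + (1 - θ) • y) = -(θ • (x - y)) := by module
  rw [hx_sub, map_smul_eq_mul, Real.norm_of_nonneg hθ0.le] at hlip_x
  rw [hy_sub, map_neg_eq_map, map_smul_eq_mul, Real.norm_of_nonneg hθ0.le] at hlip_y
  have : θ * (α * D x y) ≤ θ * (2 * L * p (x - y) + θ * (α * D x y)) := by nlinarith
  exact le_of_mul_le_mul_left this hθ0

/-- Optimality of `x` against `e` bounds `ℓ x' - ℓ e`; hence moving `z` a fraction `θ` towards
`x'` instead of towards `x` costs at most `2 θ s L p (e - x')`. -/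
theorem StrongConvexOnWrt.mul_le_of_isMinOn_add_linearMap (hR : StrongConvexOnWrt S α D R)
    (hS : Convex ℝ S) (hF : Convex ℝ F) (hFS : F ⊆ S)
    (hlip : ∀ x ∈ S, ∀ y ∈ S, R x - R y ≤ L * p (x - y)) (ℓ : E →ₗ[ℝ] ℝ)
    (hx : x ∈ S) (hxmin : IsMinOn (R + ⇑ℓ) S x) (hz : z ∈ F) (hzmin : IsMinOn (R + ⇑ℓ) F z)
    (hx' : x' ∈ F) (he : e ∈ S) (hs0 : 0 ≤ s) (hs1 : s < 1) (hxe : x = (1 - s) • x' + s • e) :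
    α * D x z ≤ 2 * s * L * p (e - x') := by
  have hℓx : ℓ x = (1 - s) * ℓ x' + s * ℓ e := by
    rw [hxe, map_add, map_smul, map_smul, smul_eq_mul, smul_eq_mul]
  have hℓ : ℓ x' - ℓ e ≤ L * p (e - x') := by
    have hopt : R x + ℓ x ≤ R e + ℓ e := hxmin he
    have hlip_e := hlip e he x hx
    have he_sub : e - x = (1 - s) • (e - x') := by rw [hxe]; module
    rw [he_sub, map_smul_eq_mul, Real.norm_of_nonneg (by linarith)] at hlip_e
    have : (1 - s) * (ℓ x' - ℓ e) ≤ (1 - s) * (L * p (e - x')) := by nlinarith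
    exact le_of_mul_le_mul_left this (by linarith)
  refine (hR.add_linearMap ℓ).mul_le_of_isMinOn_of_isMinOn_subset hS hF hFS hx hxmin hz hzmin hx'
    fun θ ⟨hθ0, hθ1⟩ => ?_
  have hsub : θ • x' + (1 - θ) • z - (θ • x + (1 - θ) • z) = -((θ * s) • (e - x')) := by
    rw [hxe]; module
  have hlip_θ := hlip _ (hFS (hF hx' hz hθ0.le (by linarith) (add_sub_cancel θ 1)))
    _ (hS hx (hFS hz) hθ0.le (by linarith) (add_sub_cancel θ 1))
  rw [hsub, map_neg_eq_map, map_smul_eq_mul, Real.norm_of_nonneg (by positivity)] at hlip_θ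
  have hℓθ := mul_le_mul_of_nonneg_left hℓ (by positivity : 0 ≤ θ * s)
  simp only [Pi.add_apply, map_add, map_smul, smul_eq_mul, hℓx]
  nlinarith

end StrongConvexity

section Simplex

variable {ι : Type*} [Fintype ι]

variable (ι) in
def l1Seminorm : Seminorm ℝ (ι → ℝ) :=
  ∑ i, (normSeminorm ℝ ℝ).comp (LinearMap.proj i)

@[simp]
theorem l1Seminorm_apply (v : ι → ℝ) : l1Seminorm ι v = ∑ i, |v i| := by
  simp [l1Seminorm]

theorem l1Seminorm_sub_le_two {x y : ι → ℝ} (hx : x ∈ stdSimplex ℝ ι) (hy : y ∈ stdSimplex ℝ ι) :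
    l1Seminorm ι (x - y) ≤ 2 := calc
  l1Seminorm ι (x - y) ≤ ∑ i, (x i + y i) := by
    rw [l1Seminorm_apply]
    gcongr with i
    rw [Pi.sub_apply, abs_sub_le_iff]
    constructor <;> linarith [hx.1 i, hy.1 i]
  _ = 2 := by rw [Finset.sum_add_distrib, hx.2, hy.2]; norm_num

variable [DecidableEq ι]

theorem l1Seminorm_single_sub {y : ι → ℝ} (hy : y ∈ stdSimplex ℝ ι) {j : ι} (hyj : y j = 0) :
    l1Seminorm ι (Pi.single j 1 - y) = 2 := by
  have hterm (i : ι) : |((Pi.single j 1 : ι → ℝ) - y) i| = (Pi.single j 1 : ι → ℝ) i + y i := by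
    rcases eq_or_ne i j with rfl | hij
    · simp [hyj]
    · simp [hij, abs_of_nonneg (hy.1 i)]
  rw [l1Seminorm_apply, Finset.sum_congr rfl fun i _ => hterm i, Finset.sum_add_distrib, hy.2,
    Finset.sum_pi_single']
  norm_num

theorem exists_mem_stdSimplex_eq_smul_add_smul_single {y : ι → ℝ} (hy : y ∈ stdSimplex ℝ ι)
    {j : ι} (hyj : y j < 1) :
    ∃ y' ∈ stdSimplex ℝ ι, y' j = 0 ∧ y = (1 - y j) • y' + y j • Pi.single j 1 := by
  have hpos : 0 < 1 - y j := by linarith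
  refine ⟨(1 - y j)⁻¹ • (y - y j • Pi.single j 1), ⟨fun i => ?_, ?_⟩, by simp, ?_⟩
  · rcases eq_or_ne i j with rfl | hij
    · simp
    · simpa [Pi.single_apply, hij] using mul_nonneg (inv_nonneg.2 hpos.le) (hy.1 i)
  · simp only [Pi.smul_apply, Pi.sub_apply, smul_eq_mul, ← Finset.mul_sum, Finset.sum_sub_distrib,
      hy.2, Finset.sum_pi_single', Finset.mem_univ, if_true, mul_one]
    field_simp
  · rw [smul_inv_smul₀ hpos.ne', sub_add_cancel]

omit [DecidableEq ι] in
theorem convex_stdSimplex_inter_apply_eq_zero (j : ι) :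
    Convex ℝ (stdSimplex ℝ ι ∩ {y | y j = 0}) :=
  (convex_stdSimplex ℝ ι).inter (convex_hyperplane (LinearMap.proj j).isLinear 0)

end Simplex

theorem isMinOn_add_dotProduct_of_ftrlObj_le {n : ℕ} {U : Fin n → ℝ} {R : (Fin n → ℝ) → ℝ}
    {η : ℝ} (hη : 0 < η) {S : Set (Fin n → ℝ)} {x : Fin n → ℝ}
    (h : ∀ y ∈ S, ftrlObj U R η y ≤ ftrlObj U R η x) :
    IsMinOn (R + ⇑(dotProductBilin ℝ ℝ (-η • U))) S x := fun y hy => by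
  have hobj (z : Fin n → ℝ) : ftrlObj U R η z = -(R + ⇑(dotProductBilin ℝ ℝ (-η • U))) z / η := by
    have hsum : ∑ i, (-η • U) i * z i = -η * ∑ i, U i * z i := by
      simp [Finset.mul_sum, mul_assoc]
    simp only [ftrlObj, Pi.add_apply, dotProductBilin_apply_apply, dotProduct, hsum]
    field_simp
    ring
  have := h y hy
  rwa [hobj, hobj, div_le_div_iff_of_pos_right hη, neg_le_neg_iff] at this

theorem ftrl_restriction_estimate_general
    (n : ℕ) (α η L : ℝ) (hα : 0 < α) (hη : 0 < η) (hL : 0 ≤ L)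
    (R : (Fin n → ℝ) → ℝ)
    (hsc : ∀ y ∈ stdSimplex ℝ (Fin n), ∀ y' ∈ stdSimplex ℝ (Fin n), ∀ t ∈ Set.Icc (0 : ℝ) 1,
      R (t • y + (1 - t) • y') ≤
        t * R y + (1 - t) * R y' - α / 2 * t * (1 - t) * ∑ i, (y i - y' i) ^ 2)
    (hlip : ∀ y ∈ stdSimplex ℝ (Fin n), ∀ y' ∈ stdSimplex ℝ (Fin n),
      |R y - R y'| ≤ L * ∑ i, |y i - y' i|)
    (U : Fin n → ℝ) (j : Fin n)
    (ystar : Fin n → ℝ) (hy1 : ystar ∈ stdSimplex ℝ (Fin n))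
    (hy2 : ∀ y ∈ stdSimplex ℝ (Fin n), ftrlObj U R η y ≤ ftrlObj U R η ystar)
    (yflat : Fin n → ℝ) (hz1 : yflat ∈ stdSimplex ℝ (Fin n)) (hzj : yflat j = 0)
    (hz2 : ∀ y ∈ stdSimplex ℝ (Fin n), y j = 0 → ftrlObj U R η y ≤ ftrlObj U R η yflat)
    (γ : ℝ) (hyj : ystar j ≤ γ) :
    Real.sqrt (∑ i, (ystar i - yflat i) ^ 2) ≤ 2 * Real.sqrt (L * γ / α) := by
  have hR : StrongConvexOnWrt (stdSimplex ℝ (Fin n)) α (fun y y' => ∑ i, (y i - y' i) ^ 2) R :=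
    hsc
  have hR_lip : ∀ y ∈ stdSimplex ℝ (Fin n), ∀ y' ∈ stdSimplex ℝ (Fin n),
      R y - R y' ≤ L * l1Seminorm (Fin n) (y - y') := fun y hy y' hy' => by
    simpa using (le_abs_self _).trans (hlip y hy y' hy')
  have hkey : α * ∑ i, (ystar i - yflat i) ^ 2 ≤ 4 * L * ystar j := by
    rcases (mem_Icc_of_mem_stdSimplex hy1 j).2.lt_or_eq with hs | hs
    · obtain ⟨y', hy', hy'j, hdecomp⟩ := exists_mem_stdSimplex_eq_smul_add_smul_single hy1 hs
      have hbound := hR.mul_le_of_isMinOn_add_linearMap _ (convex_stdSimplex ℝ _)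
        (convex_stdSimplex_inter_apply_eq_zero j) inter_subset_left hR_lip _ hy1
        (isMinOn_add_dotProduct_of_ftrlObj_le hη hy2) ⟨hz1, hzj⟩
        (isMinOn_add_dotProduct_of_ftrlObj_le hη fun y hy => hz2 y hy.1 hy.2) ⟨hy', hy'j⟩
        (single_mem_stdSimplex ℝ j) (hy1.1 j) hs hdecomp
      rw [l1Seminorm_single_sub hy' hy'j] at hbound
      linarith
    · have hbound := hR.mul_le_two_mul_seminorm _ (convex_stdSimplex ℝ _) hR_lip hy1 hz1
      have hl1 := l1Seminorm_sub_le_two hy1 hz1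
      rw [hs]
      nlinarith
  calc Real.sqrt (∑ i, (ystar i - yflat i) ^ 2) ≤ Real.sqrt (2 ^ 2 * (L * γ / α)) := by
        refine Real.sqrt_le_sqrt ?_
        rw [← mul_div_assoc, le_div_iff₀ hα]
        nlinarith
    _ = 2 * Real.sqrt (L * γ / α) := by
        rw [Real.sqrt_mul (by positivity), Real.sqrt_sq zero_le_two]

/-- key FTRL estimate. If `R` is `α`-strongly convex (Euclidean norm) and
`L`-Lipschitz (ℓ1 norm) on the simplex, `y*` is the unique maximizer of
`Φ(y) = ⟨U,y⟩ − R(y)/η` over `Δ_n`, `y♭` is the unique maximizer of `Φ` over the face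
`{y : y_j = 0}`, and `y*_j ≤ γ`, then `‖y* − y♭‖₂ ≤ 2√(Lγ/α)`. -/
theorem ftrl_restriction_estimate
    (n : ℕ) (hn : 2 ≤ n) (α η L : ℝ) (hα : 0 < α) (hη : 0 < η) (hL : 0 ≤ L)
    (R : (Fin n → ℝ) → ℝ)
    (hsc : ∀ y ∈ stdSimplex ℝ (Fin n), ∀ y' ∈ stdSimplex ℝ (Fin n), ∀ t ∈ Set.Icc (0 : ℝ) 1,
      R (t • y + (1 - t) • y') ≤
        t * R y + (1 - t) * R y' - α / 2 * t * (1 - t) * ∑ i, (y i - y' i) ^ 2)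
    (hlip : ∀ y ∈ stdSimplex ℝ (Fin n), ∀ y' ∈ stdSimplex ℝ (Fin n),
      |R y - R y'| ≤ L * ∑ i, |y i - y' i|)
    (U : Fin n → ℝ) (j : Fin n) (hUj : U j ≤ ⨆ j' : Fin n, U j')
    (ystar : Fin n → ℝ) (hy1 : ystar ∈ stdSimplex ℝ (Fin n))
    (hy2 : ∀ y ∈ stdSimplex ℝ (Fin n), ftrlObj U R η y ≤ ftrlObj U R η ystar)
    (hy3 : ∀ y ∈ stdSimplex ℝ (Fin n), ftrlObj U R η y = ftrlObj U R η ystar → y = ystar)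
    (yflat : Fin n → ℝ) (hz1 : yflat ∈ stdSimplex ℝ (Fin n)) (hzj : yflat j = 0)
    (hz2 : ∀ y ∈ stdSimplex ℝ (Fin n), y j = 0 → ftrlObj U R η y ≤ ftrlObj U R η yflat)
    (hz3 : ∀ y ∈ stdSimplex ℝ (Fin n), y j = 0 →
      ftrlObj U R η y = ftrlObj U R η yflat → y = yflat)
    (γ : ℝ) (hγ : 0 ≤ γ) (hyj : ystar j ≤ γ) :
    Real.sqrt (∑ i, (ystar i - yflat i) ^ 2) ≤ 2 * Real.sqrt (L * γ / α) :=
  ftrl_restriction_estimate_general n α η L hα hη hL R hsc hlip U j ystar hy1 hy2 yflat hz1 hzj hz2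
    γ hyj
end
end
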